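/- For α > 0, n ∈ ℕ, l ∈ ℕ₀, and |λ| < 1: ∑_{j=1}^n β_{α,n}(j)/(1-λ)^{j+1} = ∑_{l=0}^∞ λ^l Γ(α(l+1)+n)/(Γ(α(l+1))Γ(n+1)), where the coefficients β_{α,n}(j) are defined recursively by β_{α,1}(1)=k^α(1), β_{α,n}(1)=k^α(n)-∑_{j=1}^{n-1}k^α(n-j)β_{α,j}(1), β_{α,n}(l)=∑_{j=l-1}^{n-1}k^α(n-j)β_{α,j}(l-1)-∑_{j=l}^{n-1}k^α(n-j)β_{α,j}(l) for 2≤l≤n-1, and β_{α,n}(n)=α^n. -/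

import Mathlib

noncomputable def kk (β : ℝ) (n : ℕ) : ℝ :=
  Real.Gamma (β + n) / (Real.Gamma β * Real.Gamma (n + 1))

/-- Table of the coefficients `β_{α,n}(l)` up to row `N`: `betaTab α N n l = β_{α,n}(l)`
for `n ≤ N` (values at `n > N` being irrelevant placeholders). -/
noncomputable def betaTab (α : ℝ) : ℕ → ℕ → ℕ → ℝ
  | 0 => fun _ _ => 0
  | N + 1 => fun n l =>
      if n ≤ N then betaTab α N n l
      else
        if l = n then α ^ n
        else if l = 1 then
          kk α n - ∑ j ∈ Finset.Icc 1 (n - 1), kk α (n - j) * betaTab α N j 1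
        else
          (∑ j ∈ Finset.Icc (l - 1) (n - 1), kk α (n - j) * betaTab α N j (l - 1)) -
            ∑ j ∈ Finset.Icc l (n - 1), kk α (n - j) * betaTab α N j l

/-- The coefficients `β_{α,n}(l)` defined recursively. -/
noncomputable def betaC (α : ℝ) (n l : ℕ) : ℝ := betaTab α n n l

/-!
Write `K = (1 - X) ^ (-α) = ∑ₙ k^α(n) Xⁿ` and `Bₗ = ∑ₙ β_{α,n}(l) Xⁿ`. The recursion for the
`β_{α,n}(l)` says exactly `B₁ K = K - 1` and `B_{l+1} K = Bₗ (K - 1)`, so `Bₗ = Wˡ` with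
`W = 1 - (1 - X) ^ α`. Substituting `W` into `(1 - X) ^ (-m) = ∑ⱼ multichoose m j Xʲ` gives
`(1 - W) ^ (-m) = (1 - X) ^ (-α m)`, and comparing `n`-th coefficients,
`k^{α m}(n) = ∑ⱼ β_{α,n}(j) multichoose m j`. For `m = l + 1` this multichoose is `C(l + j, j)`,
and `∑ₗ C(l + j, j) λˡ = (1 - λ) ^ (-(j + 1))`.
-/

open PowerSeries Finset

lemma Real.Gamma_add_nat_eq_mul_ascPochhammer {β : ℝ} (hβ : 0 < β) (n : ℕ) :
    Real.Gamma (β + n) = Real.Gamma β * (ascPochhammer ℝ n).eval β := by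
  induction n with
  | zero => simp
  | succ n ih =>
    rw [Nat.cast_succ, ← add_assoc, Real.Gamma_add_one (by positivity), ih,
      ascPochhammer_succ_eval]
    ring

lemma Ring.multichoose_eq_ascPochhammer_div {K : Type*} [Field K] [CharZero K] (r : K) (n : ℕ) :
    Ring.multichoose r n = (ascPochhammer K n).eval r / n.factorial := by
  rw [eq_div_iff (Nat.cast_ne_zero.2 n.factorial_ne_zero),
    ← Polynomial.ascPochhammer_smeval_eq_eval, ← Ring.factorial_nsmul_multichoose_eq_ascPochhammer,
    nsmul_eq_mul, mul_comm]

lemma Ring.multichoose_natCast_succ {R : Type*} [Ring R] [BinomialRing R] (m j : ℕ) :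
    Ring.multichoose ((m + 1 : ℕ) : R) j = (m + j).choose j := by
  rw [Ring.multichoose_eq, ← Ring.choose_natCast, Nat.cast_succ, add_right_comm,
    add_sub_cancel_right, Nat.cast_add]

/-- `(1 - X) ^ (-β)`, the generating function of `kk β` for `β > 0`. -/
noncomputable def invOneSubRPow (β : ℝ) : ℝ⟦X⟧ := rescale (-1 : ℝ) (binomialSeries ℝ (-β))

lemma invOneSubRPow_add (β γ : ℝ) :
    invOneSubRPow (β + γ) = invOneSubRPow β * invOneSubRPow γ := by
  rw [invOneSubRPow, neg_add, binomialSeries_add, map_mul]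
  rfl

lemma invOneSubRPow_mul_invOneSubRPow_neg (β : ℝ) :
    invOneSubRPow β * invOneSubRPow (-β) = 1 := by
  rw [← invOneSubRPow_add, add_neg_cancel, invOneSubRPow, neg_zero, binomialSeries_zero, map_one]

lemma invOneSubRPow_natCast_mul (m : ℕ) (β : ℝ) :
    invOneSubRPow (m * β) = invOneSubRPow β ^ m := by
  induction m with
  | zero => simp [invOneSubRPow]
  | succ m ih => rw [Nat.cast_succ, add_one_mul, invOneSubRPow_add, ih, pow_succ]

lemma invOneSubRPow_one_mul_one_sub_X : invOneSubRPow 1 * (1 - X) = 1 := by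
  have h : (1 - X : ℝ⟦X⟧) = invOneSubRPow (-1) := by
    have h1 := binomialSeries_nat (R := ℝ) (A := ℝ) 1
    rw [Nat.cast_one, pow_one] at h1
    rw [invOneSubRPow, neg_neg, h1, map_add, map_one, rescale_X, sub_eq_add_neg]
    simp
  rw [h, invOneSubRPow_mul_invOneSubRPow_neg]

lemma coeff_invOneSubRPow (β : ℝ) (n : ℕ) :
    coeff n (invOneSubRPow β) = Ring.multichoose β n := by
  rw [invOneSubRPow, coeff_rescale, binomialSeries_coeff, Ring.choose_neg', Units.smul_def,
    zsmul_eq_mul, Int.cast_negOnePow_natCast, smul_eq_mul, mul_one, ← mul_assoc, ← mul_pow]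
  simp

lemma kk_eq_multichoose {β : ℝ} (hβ : 0 < β) (n : ℕ) : kk β n = Ring.multichoose β n := by
  rw [kk, Real.Gamma_add_nat_eq_mul_ascPochhammer hβ, Real.Gamma_nat_eq_factorial,
    Ring.multichoose_eq_ascPochhammer_div, mul_div_mul_left _ _ (Real.Gamma_pos_of_pos hβ).ne']

lemma kk_one {α : ℝ} (hα : 0 < α) : kk α 1 = α := by
  rw [kk_eq_multichoose hα, Ring.multichoose_one_right]

lemma betaTab_eq_betaC (α : ℝ) {N n : ℕ} (h : n ≤ N) (l : ℕ) : betaTab α N n l = betaC α n l := by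
  induction N with
  | zero =>
    obtain rfl : n = 0 := by omega
    rfl
  | succ N ih =>
    rcases h.lt_or_eq with h | rfl
    · rw [betaTab]
      dsimp only
      rw [if_pos (by omega), ih (by omega)]
    · rfl

lemma betaC_zero_left (α : ℝ) (l : ℕ) : betaC α 0 l = 0 := rfl

lemma betaC_self (α : ℝ) {n : ℕ} (hn : 1 ≤ n) : betaC α n n = α ^ n := by
  obtain ⟨N, rfl⟩ : ∃ N, n = N + 1 := ⟨n - 1, by omega⟩
  simp [betaC, betaTab]

lemma betaC_one (α : ℝ) {n : ℕ} (hn : 2 ≤ n) :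
    betaC α n 1 = kk α n - ∑ j ∈ Icc 1 (n - 1), kk α (n - j) * betaC α j 1 := by
  obtain ⟨N, rfl⟩ : ∃ N, n = N + 1 := ⟨n - 1, by omega⟩
  rw [betaC, betaTab]
  dsimp only
  rw [if_neg (by omega), if_neg (by omega), if_pos rfl]
  refine congrArg _ (sum_congr rfl fun j hj => ?_)
  rw [betaTab_eq_betaC α (by simp at hj; omega)]

lemma betaC_of_ne (α : ℝ) {n l : ℕ} (hn : 1 ≤ n) (h1 : l ≠ 1) (hln : l ≠ n) :
    betaC α n l = (∑ j ∈ Icc (l - 1) (n - 1), kk α (n - j) * betaC α j (l - 1)) -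
      ∑ j ∈ Icc l (n - 1), kk α (n - j) * betaC α j l := by
  obtain ⟨N, rfl⟩ : ∃ N, n = N + 1 := ⟨n - 1, by omega⟩
  rw [betaC, betaTab]
  dsimp only
  rw [if_neg (by omega), if_neg hln, if_neg h1]
  congr 1 <;> refine sum_congr rfl fun j hj => ?_ <;>
    rw [betaTab_eq_betaC α (by simp at hj; omega)]

lemma betaC_eq_zero_of_lt (α : ℝ) {n l : ℕ} (h : n < l) : betaC α n l = 0 := by
  rcases Nat.eq_zero_or_pos n with rfl | hn
  · rfl
  · rw [betaC_of_ne α hn (by omega) (by omega), Icc_eq_empty (by omega), Icc_eq_empty (by omega),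
      sum_empty, sum_empty, sub_zero]

lemma sum_Icc_mul_betaC (α : ℝ) {l : ℕ} (hl : 1 ≤ l) (n : ℕ) (f : ℕ → ℝ) :
    ∑ j ∈ Icc l (n - 1), f j * betaC α j l = ∑ j ∈ range n, betaC α j l * f j := by
  refine sum_subset_zero_on_sdiff (fun j hj => ?_) (fun j hj => ?_) (fun j _ => mul_comm _ _)
  · simp only [mem_Icc, mem_range] at hj ⊢; omega
  · simp only [mem_sdiff, mem_Icc, mem_range] at hj
    rw [betaC_eq_zero_of_lt α (by omega), zero_mul]

lemma betaC_one_add_sum {α : ℝ} (hα : 0 < α) {n : ℕ} (hn : 1 ≤ n) :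
    betaC α n 1 + ∑ i ∈ range n, betaC α i 1 * kk α (n - i) = kk α n := by
  rw [← sum_Icc_mul_betaC α le_rfl n (fun i => kk α (n - i))]
  rcases hn.lt_or_eq with hn | rfl
  · rw [betaC_one α hn]
    ring
  · simp [betaC_self, kk_one hα]

/-- The diagonal value `β_{α,n}(n) = α ^ n` is the case `l + 1 = n`, since `kk α 1 = α`. -/
lemma betaC_succ_add_sum {α : ℝ} (hα : 0 < α) {l : ℕ} (hl : 1 ≤ l) (n : ℕ) :
    betaC α n (l + 1) + ∑ i ∈ range n, betaC α i (l + 1) * kk α (n - i) =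
      ∑ i ∈ range n, betaC α i l * kk α (n - i) := by
  rw [← sum_Icc_mul_betaC α hl n (fun i => kk α (n - i)),
    ← sum_Icc_mul_betaC α (by omega) n (fun i => kk α (n - i))]
  rcases lt_trichotomy (l + 1) n with h | rfl | h
  · rw [betaC_of_ne α (by omega) (by omega) h.ne, Nat.add_sub_cancel]
    ring
  · rw [Nat.add_sub_cancel, Icc_eq_empty (by omega), Icc_self, sum_singleton, sum_empty,
      betaC_self α (by omega), betaC_self α hl, Nat.add_sub_cancel_left, kk_one hα]
    ring
  · rw [betaC_eq_zero_of_lt α h, Icc_eq_empty (by omega), Icc_eq_empty (by omega)]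
    simp

noncomputable def betaSeries (α : ℝ) (l : ℕ) : ℝ⟦X⟧ := mk fun n => betaC α n l

lemma coeff_mul_invOneSubRPow_sub_one {α : ℝ} (hα : 0 < α) (f : ℝ⟦X⟧) (n : ℕ) :
    coeff n (f * (invOneSubRPow α - 1)) = ∑ i ∈ range n, coeff i f * kk α (n - i) := by
  rw [coeff_mul, Nat.sum_antidiagonal_eq_sum_range_succ
    (fun i j => coeff i f * coeff j (invOneSubRPow α - 1)), sum_range_succ]
  simp only [map_sub, coeff_invOneSubRPow, coeff_one, Nat.sub_self, Ring.multichoose_zero_right,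
    if_true, sub_self, mul_zero, add_zero]
  refine sum_congr rfl fun i hi => ?_
  rw [if_neg (by simp at hi; omega), sub_zero, kk_eq_multichoose hα]

lemma betaSeries_one_mul {α : ℝ} (hα : 0 < α) :
    betaSeries α 1 * invOneSubRPow α = invOneSubRPow α - 1 := by
  suffices h : betaSeries α 1 + betaSeries α 1 * (invOneSubRPow α - 1) = invOneSubRPow α - 1 by
    rw [← h]; ring
  ext n
  rw [map_add, coeff_mul_invOneSubRPow_sub_one hα]
  rcases Nat.eq_zero_or_pos n with rfl | hn
  · rw [map_sub, coeff_invOneSubRPow]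
    simp [betaSeries, betaC_zero_left]
  · simpa [betaSeries, coeff_invOneSubRPow, kk_eq_multichoose hα, hn.ne']
      using betaC_one_add_sum hα hn

lemma betaSeries_succ_mul {α : ℝ} (hα : 0 < α) {l : ℕ} (hl : 1 ≤ l) :
    betaSeries α (l + 1) * invOneSubRPow α = betaSeries α l * (invOneSubRPow α - 1) := by
  suffices h : betaSeries α (l + 1) + betaSeries α (l + 1) * (invOneSubRPow α - 1) =
      betaSeries α l * (invOneSubRPow α - 1) by
    rw [← h]; ring
  ext n
  rw [map_add, coeff_mul_invOneSubRPow_sub_one hα, coeff_mul_invOneSubRPow_sub_one hα]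
  simpa [betaSeries] using betaC_succ_add_sum hα hl n

lemma betaSeries_eq_pow {α : ℝ} (hα : 0 < α) {l : ℕ} (hl : 1 ≤ l) :
    betaSeries α l = (1 - invOneSubRPow (-α)) ^ l := by
  have hinv := invOneSubRPow_mul_invOneSubRPow_neg α
  induction l, hl using Nat.le_induction with
  | base =>
    calc betaSeries α 1 = betaSeries α 1 * invOneSubRPow α * invOneSubRPow (-α) := by
          rw [mul_assoc, hinv, mul_one]
      _ = (1 - invOneSubRPow (-α)) ^ 1 := by
          rw [betaSeries_one_mul hα]; linear_combination hinv
  | succ l hl ih =>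
    calc betaSeries α (l + 1) = betaSeries α (l + 1) * invOneSubRPow α * invOneSubRPow (-α) := by
          rw [mul_assoc, hinv, mul_one]
      _ = (1 - invOneSubRPow (-α)) ^ (l + 1) := by
          rw [betaSeries_succ_mul hα hl, ih, pow_succ]; linear_combination
            (1 - invOneSubRPow (-α)) ^ l * hinv

lemma subst_invOneSubRPow_natCast {W G : ℝ⟦X⟧} (hW : constantCoeff W = 0) (hG : G * (1 - W) = 1)
    (m : ℕ) : (invOneSubRPow m).subst W = G ^ m := by
  have hW' : HasSubst W := HasSubst.of_constantCoeff_zero' hW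
  have h1 : (invOneSubRPow 1).subst W * (1 - W) = 1 := by
    have h := congrArg (substAlgHom hW') invOneSubRPow_one_mul_one_sub_X
    rwa [map_mul, map_sub, map_one, substAlgHom_X, coe_substAlgHom] at h
  rw [← mul_one (m : ℝ), invOneSubRPow_natCast_mul, subst_pow hW']
  congr 1
  linear_combination G * h1 - (invOneSubRPow 1).subst W * hG

theorem multichoose_natCast_mul_eq_sum_betaC {α : ℝ} (hα : 0 < α) (m : ℕ) {n : ℕ} (hn : 1 ≤ n) :
    Ring.multichoose (m * α) n = ∑ j ∈ Icc 1 n, betaC α n j * Ring.multichoose (m : ℝ) j := by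
  set W := 1 - invOneSubRPow (-α)
  have hW : constantCoeff W = 0 := by
    rw [map_sub, map_one, ← coeff_zero_eq_constantCoeff_apply, coeff_invOneSubRPow,
      Ring.multichoose_zero_right, sub_self]
  have hG : invOneSubRPow α * (1 - W) = 1 := by
    rw [sub_sub_cancel, invOneSubRPow_mul_invOneSubRPow_neg]
  rw [← coeff_invOneSubRPow, invOneSubRPow_natCast_mul, ← subst_invOneSubRPow_natCast hW hG,
    coeff_subst' (HasSubst.of_constantCoeff_zero' hW),
    finsum_eq_sum_of_support_subset (s := Icc 1 n)]
  · refine sum_congr rfl fun j hj => ?_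
    rw [coeff_invOneSubRPow, ← betaSeries_eq_pow hα (by simp at hj; omega), betaSeries, coeff_mk,
      smul_eq_mul, mul_comm]
  · refine Function.support_subset_iff'.2 fun j hj => ?_
    simp only [coe_Icc, Set.mem_Icc, not_and_or, not_le, Nat.lt_one_iff] at hj
    rcases hj with rfl | hj
    · rw [pow_zero, coeff_one, if_neg (by omega), smul_zero]
    · rw [← betaSeries_eq_pow hα (by omega), betaSeries, coeff_mk, betaC_eq_zero_of_lt α hj,
        smul_zero]

lemma tsum_geometric_mul_sum_choose {lam : ℂ} (hlam : ‖lam‖ < 1) (s : Finset ℕ) (c : ℕ → ℂ) :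
    ∑' l : ℕ, lam ^ l * ∑ j ∈ s, c j * ((l + j).choose j : ℂ) =
      ∑ j ∈ s, c j / (1 - lam) ^ (j + 1) := by
  simp_rw [mul_sum]
  rw [Summable.tsum_finsetSum fun j _ =>
    ((summable_choose_mul_geometric_of_norm_lt_one j hlam).mul_left (c j)).congr fun l => by ring]
  refine sum_congr rfl fun j _ => ?_
  rw [div_eq_mul_one_div, ← tsum_choose_mul_geometric_of_norm_lt_one j hlam, ← tsum_mul_left]
  exact tsum_congr fun l => by ring

theorem stmt19 (α : ℝ) (hα : 0 < α) (n : ℕ) (hn : 1 ≤ n) (lam : ℂ) (hlam : ‖lam‖ < 1) :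
    ∑ j ∈ Finset.Icc 1 n, (betaC α n j : ℂ) / (1 - lam) ^ (j + 1) =
      ∑' l : ℕ,
        lam ^ l *
          ((Real.Gamma (α * (l + 1) + n) /
              (Real.Gamma (α * (l + 1)) * n.factorial) : ℝ) : ℂ) := by
  have hcoeff (l : ℕ) : Real.Gamma (α * (l + 1) + n) / (Real.Gamma (α * (l + 1)) * n.factorial) =
      ∑ j ∈ Icc 1 n, betaC α n j * (l + j).choose j := by
    have h := kk_eq_multichoose (by positivity : 0 < α * (l + 1)) n
    rw [kk, Real.Gamma_nat_eq_factorial] at h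
    rw [h, mul_comm, ← Nat.cast_succ, multichoose_natCast_mul_eq_sum_betaC hα _ hn]
    simp_rw [Ring.multichoose_natCast_succ]
  simp_rw [hcoeff]
  push_cast
  exact (tsum_geometric_mul_sum_choose hlam _ _).symm
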